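/- arXiv:2101.09089 — 3 statements merged into one kernel-verified Lean document; each statement's English description precedes it below -/
import Mathlib

section
/- For any natural numbers m, q, n with n ≥ q, any p with 0 ≤ p ≤ m, and sequences a_{(1)},...,a_{(m)} defined on [q, n+1], R_{m,q,n+1} = Σ_{k=p+1}^{m} (Π_{j=0}^{m-k-1} a_{(m-j)}(n+1)) R_{k,q,n} + (Π_{j=0}^{m-p-1} a_{(m-j)}(n+1)) R_{p,q,n+1}. -/
/-!
Downward induction on `p`: the case `p = m` is trivial, and passing from `p + 1` to `p` splits
`R_{p+1,q,n+1}` into the terms with `N_{p+1} ≤ n`, which give `R_{p+1,q,n}`, and the terms with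
`N_{p+1} = n + 1`, which give `a_{(p+1)}(n+1) R_{p,q,n+1}`.
-/

/-- Recurrent sum: `recSum a q m n = Σ_{q ≤ N_1 ≤ ⋯ ≤ N_m ≤ n} a m N_m ⋯ a 1 N_1`,
with `recSum a q 0 n = 1`. -/
def recSum (a : ℕ → ℕ → ℝ) (q : ℕ) : ℕ → ℕ → ℝ
  | 0, _ => 1
  | m + 1, n => ∑ N ∈ Finset.Icc q n, a (m + 1) N * recSum a q m N

open Finset

lemma recSum_succ_succ (a : ℕ → ℕ → ℝ) {q : ℕ} (m : ℕ) {n : ℕ} (hqn : q ≤ n + 1) :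
    recSum a q (m + 1) (n + 1)
      = recSum a q (m + 1) n + a (m + 1) (n + 1) * recSum a q m (n + 1) :=
  sum_Icc_succ_top hqn _

lemma prod_range_tsub_eq_mul {M : Type*} [CommMonoid M] (f : ℕ → M) {p m : ℕ} (hpm : p < m) :
    ∏ j ∈ range (m - p), f (m - j) = (∏ j ∈ range (m - (p + 1)), f (m - j)) * f (p + 1) := by
  obtain ⟨d, rfl⟩ : ∃ d, m = p + 1 + d := ⟨m - (p + 1), by omega⟩
  rw [show p + 1 + d - p = d + 1 by omega, prod_range_succ, show p + 1 + d - (p + 1) = d by omega,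
    show p + 1 + d - d = p + 1 by omega]

theorem stmt_3 (m q n p : ℕ) (hqn : q ≤ n) (hpm : p ≤ m) (a : ℕ → ℕ → ℝ) :
    recSum a q m (n + 1)
      = (∑ k ∈ Finset.Icc (p + 1) m,
          (∏ j ∈ Finset.range (m - k), a (m - j) (n + 1)) * recSum a q k n)
        + (∏ j ∈ Finset.range (m - p), a (m - j) (n + 1)) * recSum a q p (n + 1) := by
  induction hpm using Nat.decreasingInduction with
  | self => simp
  | of_succ p hpm ih =>
    rw [ih, ← add_sum_Ioc_eq_sum_Icc (show p + 1 ≤ m from hpm), ← Icc_add_one_left_eq_Ioc,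
      recSum_succ_succ a p (by omega), prod_range_tsub_eq_mul (a · (n + 1)) hpm]
    ring
end

section
/- Let (φ_1,...,φ_m) be non-negative integers with Σ_{i=1}^{m} i·φ_i = r ≤ m. Then Σ over all tuples (y_1,...,y_m) of non-negative integers with Σ i·y_i = m of Π_{i=1}^{m} C(y_i, φ_i)/(i^{y_i} · y_i!) equals Π_{i=1}^{m} 1/(i^{φ_i} · φ_i!). -/
/-!
Write `z_y = ∏ (i+1)^{y_i} y_i!` for a multiplicity vector `y`. Since
`C(t+k, k) / (a^{t+k} (t+k)!) = 1/(a^k k!) · 1/(a^t t!)`, the shift `y ↦ y - φ` turns the sum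
into `1/z_φ · S(m - r)`, where `S(n) = ∑_{|z| = n} 1/z_z`. Taking `φ` to be a single part of
size `i+1` in the same identity gives `n · S(n) = ∑_{i < n} S(n - i - 1)`, so `S(n) = 1` for
`n ≤ m` by strong induction (`S(n)` is the probability that a random permutation of `n` letters
has some cycle type).
-/

open Finset

variable {m : ℕ}

/-- `y i` is the number of parts of size `i + 1`. -/
def partitionSize (y : Fin m → ℕ) : ℕ := ∑ i, (i.1 + 1) * y i

lemma partitionSize_add (y z : Fin m → ℕ) :
    partitionSize (y + z) = partitionSize y + partitionSize z := by
  simp only [partitionSize, Pi.add_apply, mul_add, sum_add_distrib]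

lemma mul_le_partitionSize (y : Fin m → ℕ) (i : Fin m) : (i.1 + 1) * y i ≤ partitionSize y :=
  single_le_sum (f := fun i : Fin m => (i.1 + 1) * y i) (fun _ _ => Nat.zero_le _) (mem_univ i)

lemma partitionSize_zero : partitionSize (0 : Fin m → ℕ) = 0 := by
  simp [partitionSize]

lemma eq_zero_of_partitionSize_eq_zero {y : Fin m → ℕ} (hy : partitionSize y = 0) : y = 0 :=
  funext fun i => by have := mul_le_partitionSize y i; simp_all

lemma partitionSize_single (i : Fin m) : partitionSize (Pi.single i 1) = i.1 + 1 := by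
  simp [partitionSize, Pi.single_apply]

def partitionMultiplicities (m n : ℕ) : Finset (Fin m → ℕ) :=
  {y ∈ Fintype.piFinset fun _ => range (n + 1) | partitionSize y = n}

lemma mem_partitionMultiplicities {n : ℕ} {y : Fin m → ℕ} :
    y ∈ partitionMultiplicities m n ↔ partitionSize y = n := by
  refine ⟨fun h => (mem_filter.mp h).2, fun h => mem_filter.mpr ⟨?_, h⟩⟩
  refine Fintype.mem_piFinset.mpr fun i => mem_range.mpr ?_
  have := mul_le_partitionSize y i
  nlinarith

lemma partitionMultiplicities_zero : partitionMultiplicities m 0 = {0} := by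
  ext y
  simp only [mem_partitionMultiplicities, mem_singleton]
  exact ⟨eq_zero_of_partitionSize_eq_zero, fun h => h ▸ partitionSize_zero⟩

/-- The centralizer order `z_λ` of a permutation of cycle type `λ`. -/
def zCoeff (y : Fin m → ℕ) : ℕ := ∏ i, (i.1 + 1) ^ y i * (y i).factorial

section Field

variable {K : Type*} [Field K]

lemma cast_zCoeff_inv (y : Fin m → ℕ) :
    ((zCoeff y : K))⁻¹ = ∏ i, ((i.1 + 1 : K) ^ y i * (y i).factorial)⁻¹ := by
  simp only [zCoeff, Nat.cast_prod, Nat.cast_mul, Nat.cast_pow, Nat.cast_add, Nat.cast_one,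
    prod_inv_distrib]

lemma add_choose_div [CharZero K] (a : K) (t k : ℕ) :
    ((t + k).choose k : K) / (a ^ (t + k) * (t + k).factorial)
      = (a ^ k * k.factorial)⁻¹ * (a ^ t * t.factorial)⁻¹ := by
  have : ((t + k).factorial : K) ≠ 0 := Nat.cast_ne_zero.mpr (Nat.factorial_ne_zero _)
  rw [← Nat.choose_symm_add, Nat.cast_add_choose, pow_add]
  field_simp

theorem sum_prod_choose_div_eq [CharZero K] (φ : Fin m → ℕ) {n : ℕ}
    (hφ : partitionSize φ ≤ n) :
    ∑ y ∈ partitionMultiplicities m n,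
        ∏ i, ((y i).choose (φ i) : K) / ((i.1 + 1 : K) ^ y i * (y i).factorial)
      = (zCoeff φ : K)⁻¹ *
          ∑ z ∈ partitionMultiplicities m (n - partitionSize φ), (zCoeff z : K)⁻¹ := by
  set f : (Fin m → ℕ) → K := fun y =>
    ∏ i, ((y i).choose (φ i) : K) / ((i.1 + 1 : K) ^ y i * (y i).factorial)
  have hshift (z : Fin m → ℕ) : f (z + φ) = (zCoeff φ : K)⁻¹ * (zCoeff z : K)⁻¹ := by
    simp only [f, cast_zCoeff_inv, ← prod_mul_distrib, Pi.add_apply, add_choose_div]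
  have hsubset : (partitionMultiplicities m (n - partitionSize φ)).map (addRightEmbedding φ)
      ⊆ partitionMultiplicities m n := by
    intro y hy
    obtain ⟨z, hz, rfl⟩ := mem_map.mp hy
    rw [mem_partitionMultiplicities] at hz ⊢
    rw [addRightEmbedding_apply, partitionSize_add]
    omega
  have hvanish : ∀ y ∈ partitionMultiplicities m n,
      y ∉ (partitionMultiplicities m (n - partitionSize φ)).map (addRightEmbedding φ) →
        f y = 0 := by
    intro y hy hy'
    obtain ⟨i, hi⟩ : ∃ i, y i < φ i := by
      by_contra! hle
      have hcancel : y - φ + φ = y := tsub_add_cancel_of_le (show φ ≤ y from hle)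
      refine hy' (mem_map.mpr ⟨y - φ, ?_, hcancel⟩)
      rw [mem_partitionMultiplicities] at hy ⊢
      have := partitionSize_add (y - φ) φ
      rw [hcancel] at this
      omega
    exact prod_eq_zero (mem_univ i) (by rw [Nat.choose_eq_zero_of_lt hi, Nat.cast_zero, zero_div])
  rw [← sum_subset hsubset hvanish, sum_map, mul_sum]
  exact sum_congr rfl fun z _ => hshift z

lemma zCoeff_single (i : Fin m) : zCoeff (Pi.single i 1) = i.1 + 1 := by
  rw [zCoeff, Fintype.prod_eq_single i fun j hj => by simp [hj]]
  simp

lemma prod_choose_single_div (y : Fin m → ℕ) (i : Fin m) :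
    ∏ j, ((y j).choose ((Pi.single i 1 : Fin m → ℕ) j) : K)
        / ((j.1 + 1 : K) ^ y j * (y j).factorial)
      = y i * (zCoeff y : K)⁻¹ := by
  simp only [div_eq_mul_inv, prod_mul_distrib, cast_zCoeff_inv]
  rw [Fintype.prod_eq_single i fun j hj => by simp [hj]]
  simp

lemma sum_mul_zCoeff_inv [CharZero K] (i : Fin m) (n : ℕ) :
    ∑ y ∈ partitionMultiplicities m n, ((i.1 + 1) * y i : K) * (zCoeff y : K)⁻¹
      = if i.1 + 1 ≤ n then
          ∑ z ∈ partitionMultiplicities m (n - (i.1 + 1)), (zCoeff z : K)⁻¹ else 0 := by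
  split_ifs with hin
  · have h := sum_prod_choose_div_eq (K := K) (Pi.single i 1) (n := n)
      (by rwa [partitionSize_single])
    simp only [prod_choose_single_div, zCoeff_single, partitionSize_single] at h
    have hi : (i.1 + 1 : K) ≠ 0 := Nat.cast_add_one_ne_zero i.1
    simp only [mul_assoc, ← mul_sum, h]
    push_cast
    field_simp
  · refine sum_eq_zero fun y hy => ?_
    have := mul_le_partitionSize y i
    rw [mem_partitionMultiplicities] at hy
    have : y i = 0 := by nlinarith
    simp [this]

theorem sum_zCoeff_inv [CharZero K] {n : ℕ} (hn : n ≤ m) :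
    ∑ y ∈ partitionMultiplicities m n, (zCoeff y : K)⁻¹ = 1 := by
  induction n using Nat.strong_induction_on with
  | _ n ih =>
  rcases Nat.eq_zero_or_pos n with rfl | hpos
  · simp [partitionMultiplicities_zero, zCoeff]
  have hcount : ∑ i : Fin m, (if i.1 + 1 ≤ n then (1 : K) else 0) = n := by
    rw [Fin.sum_univ_eq_sum_range (fun i => if i + 1 ≤ n then (1 : K) else 0) m, sum_boole]
    rw [show {i ∈ range m | i + 1 ≤ n} = range n by ext; simp; omega, card_range]
  have h : (n : K) * ∑ y ∈ partitionMultiplicities m n, (zCoeff y : K)⁻¹ = n := calc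
    _ = ∑ y ∈ partitionMultiplicities m n, (partitionSize y : K) * (zCoeff y : K)⁻¹ := by
      rw [mul_sum]
      refine sum_congr rfl fun y hy => ?_
      rw [mem_partitionMultiplicities.mp hy]
    _ = ∑ i : Fin m,
          ∑ y ∈ partitionMultiplicities m n, ((i.1 + 1) * y i : K) * (zCoeff y : K)⁻¹ := by
      rw [sum_comm]
      push_cast [partitionSize, sum_mul]
      rfl
    _ = n := by
      rw [← hcount]
      refine sum_congr rfl fun i _ => ?_
      rw [sum_mul_zCoeff_inv]
      split_ifs with hin
      · exact ih _ (by omega) (by omega)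
      · rfl
  exact mul_left_cancel₀ (Nat.cast_ne_zero.mpr hpos.ne') (h.trans (mul_one _).symm)

end Field

theorem stmt_11 (m r : ℕ) (φ : Fin m → ℕ)
    (hφ : ∑ i, (i.1 + 1) * φ i = r) (hrm : r ≤ m) :
    ∑ᶠ y ∈ {y : Fin m → ℕ | ∑ i, (i.1 + 1) * y i = m},
        ∏ i : Fin m,
          ((y i).choose (φ i) : ℝ) / ((i.1 + 1 : ℝ) ^ (y i) * (Nat.factorial (y i) : ℝ))
      = ∏ i : Fin m,
          (1 : ℝ) / ((i.1 + 1 : ℝ) ^ (φ i) * (Nat.factorial (φ i) : ℝ)) := by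
  have hset : {y : Fin m → ℕ | ∑ i, (i.1 + 1) * y i = m} = partitionMultiplicities m m :=
    Set.ext fun _ => mem_partitionMultiplicities.symm
  rw [hset, finsum_mem_coe_finset, sum_prod_choose_div_eq φ (hφ.trans_le hrm),
    sum_zCoeff_inv (Nat.sub_le m _), mul_one, cast_zCoeff_inv]
  simp only [one_div]
end

section
/- For any natural numbers q ≤ n and a sequence a : ℕ → ℝ: Σ_{q ≤ N_1 ≤ N_2 ≤ N_3 ≤ N_4 ≤ n} a(N_4)a(N_3)a(N_2)a(N_1) = (1/24)S_1^4 + (1/4)S_1^2 S_2 + (1/3)S_1 S_3 + (1/8)S_2^2 + (1/4)S_4, where S_i = Σ_{N=q}^{n} a(N)^i. -/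
/-!
Summing `a(N₁) ⋯ a(N_k)` over chains `q ≤ N₁ ≤ ⋯ ≤ N_k ≤ m` gives the complete homogeneous
symmetric polynomial `h_k` of `a(q), …, a(m)`, and the right-hand side is `h_4` written in the
power sums `S_i` (the cycle index of the symmetric group `S₄`). Both sides grow by
`a(m+1) · h_{k-1}(a(q), …, a(m+1))` when `m` becomes `m + 1`, so the identity follows by induction
on `m`, one nesting level at a time.
-/

open Finset

section NestedSums

variable {K : Type*} [Field K] [CharZero K] (a : ℕ → K) {q m : ℕ}

theorem nested_sum_Icc_two (hqm : q ≤ m) :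
    ∑ N2 ∈ Icc q m, a N2 * ∑ N1 ∈ Icc q N2, a N1
      = 1 / 2 * (∑ N ∈ Icc q m, a N) ^ 2 + 1 / 2 * ∑ N ∈ Icc q m, a N ^ 2 := by
  induction m, hqm using Nat.le_induction with
  | base => simp only [Icc_self, sum_singleton]; ring
  | succ m hqm ih =>
    rw [sum_Icc_succ_top (by omega), ih]
    simp only [sum_Icc_succ_top (by omega : q ≤ m + 1)]
    ring

theorem nested_sum_Icc_three (hqm : q ≤ m) :
    ∑ N3 ∈ Icc q m, a N3 * ∑ N2 ∈ Icc q N3, a N2 * ∑ N1 ∈ Icc q N2, a N1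
      = 1 / 6 * (∑ N ∈ Icc q m, a N) ^ 3
        + 1 / 2 * (∑ N ∈ Icc q m, a N) * ∑ N ∈ Icc q m, a N ^ 2
        + 1 / 3 * ∑ N ∈ Icc q m, a N ^ 3 := by
  induction m, hqm using Nat.le_induction with
  | base => simp only [Icc_self, sum_singleton]; ring
  | succ m hqm ih =>
    rw [sum_Icc_succ_top (by omega), ih, nested_sum_Icc_two a (by omega : q ≤ m + 1)]
    simp only [sum_Icc_succ_top (by omega : q ≤ m + 1)]
    ring

theorem nested_sum_Icc_four (hqm : q ≤ m) :
    ∑ N4 ∈ Icc q m, a N4 *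
        ∑ N3 ∈ Icc q N4, a N3 * ∑ N2 ∈ Icc q N3, a N2 * ∑ N1 ∈ Icc q N2, a N1
      = 1 / 24 * (∑ N ∈ Icc q m, a N) ^ 4
        + 1 / 4 * (∑ N ∈ Icc q m, a N) ^ 2 * ∑ N ∈ Icc q m, a N ^ 2
        + 1 / 3 * (∑ N ∈ Icc q m, a N) * ∑ N ∈ Icc q m, a N ^ 3
        + 1 / 8 * (∑ N ∈ Icc q m, a N ^ 2) ^ 2
        + 1 / 4 * ∑ N ∈ Icc q m, a N ^ 4 := by
  induction m, hqm using Nat.le_induction with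
  | base => simp only [Icc_self, sum_singleton]; ring
  | succ m hqm ih =>
    rw [sum_Icc_succ_top (by omega), ih, nested_sum_Icc_three a (by omega : q ≤ m + 1)]
    simp only [sum_Icc_succ_top (by omega : q ≤ m + 1)]
    ring

end NestedSums

theorem stmt_16 (q n : ℕ) (hqn : q ≤ n) (a : ℕ → ℝ) :
    ∑ N4 ∈ Finset.Icc q n, a N4 *
        ∑ N3 ∈ Finset.Icc q N4, a N3 *
          ∑ N2 ∈ Finset.Icc q N3, a N2 * ∑ N1 ∈ Finset.Icc q N2, a N1
      = (1 / 24) * (∑ N ∈ Finset.Icc q n, a N) ^ 4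
        + (1 / 4) * (∑ N ∈ Finset.Icc q n, a N) ^ 2 * (∑ N ∈ Finset.Icc q n, (a N) ^ 2)
        + (1 / 3) * (∑ N ∈ Finset.Icc q n, a N) * (∑ N ∈ Finset.Icc q n, (a N) ^ 3)
        + (1 / 8) * (∑ N ∈ Finset.Icc q n, (a N) ^ 2) ^ 2
        + (1 / 4) * ∑ N ∈ Finset.Icc q n, (a N) ^ 4 :=
  nested_sum_Icc_four a hqn
end
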